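/- arXiv:2410.07483 — 2 statements merged into one kernel-verified Lean document; each statement's English description precedes it below -/
import Mathlib

section
/- (Robustness of the augmented survival estimator under randomization.) Under randomization, for every z ∈ {1,...,J} and every bounded measurable function p̃ : 𝒳 → ℝ, E[1(Z=z)·(S − p̃(X))/π_z + p̃(X)] = P(S_z = 1). Consequently, if monotonicity also holds, then for every g ∈ {1,...,J} and bounded measurable p̃, p̃′ : 𝒳 → ℝ, E[(1(Z=J−g+1)·(S − p̃(X))/π_{J−g+1} + p̃(X)) − (1(Z=J−g)·(S − p̃′(X))/π_{J−g} + p̃′(X))] = P(G = g), with the convention that the subtracted term is 0 when g = J. -/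
open MeasureTheory ProbabilityTheory

noncomputable section

namespace TruncationByDeath

variable {Ω : Type*} {𝒳 : Type*} [MeasurableSpace Ω] [MeasurableSpace 𝒳]

/-- The σ-algebra on `Ω` generated by the covariate map `X`. -/
def mX (X : Ω → 𝒳) : MeasurableSpace Ω := MeasurableSpace.comap X inferInstance

/-- Real-valued indicator of the event `{Z = z}`. -/
def indic (Z : Ω → ℕ) (z : ℕ) : Ω → ℝ := fun ω => if Z ω = z then 1 else 0

/-- Observed survival status `S := ∑_z 1(Z=z) ⬝ S_z`. -/
def Sobs (J : ℕ) (Z : Ω → ℕ) (S : ℕ → Ω → ℝ) : Ω → ℝ :=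
  fun ω => ∑ z ∈ Finset.Icc 1 J, indic Z z ω * S z ω

/-- Observed outcome `Y := ∑_z 1(Z=z) ⬝ Y_z`. -/
def Yobs (J : ℕ) (Z : Ω → ℕ) (Y : ℕ → Ω → ℝ) : Ω → ℝ :=
  fun ω => ∑ z ∈ Finset.Icc 1 J, indic Z z ω * Y z ω

/-- Principal score `p_z(X) := E[S_z | σ(X)]`, with conventions `p_0 := 0` and `p_{J+1} := 1`. -/
def pscore (P : Measure Ω) (X : Ω → 𝒳) (S : ℕ → Ω → ℝ) (J : ℕ) (z : ℕ) : Ω → ℝ :=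
  if z = 0 then fun _ => 0 else if z = J + 1 then fun _ => 1 else P[S z | mX X]

/-- Treatment probability `π_z := P(Z = z)`. -/
def piZ (P : Measure Ω) (Z : Ω → ℕ) (z : ℕ) : ℝ := (P {ω | Z ω = z}).toReal

/-- Principal stratum variable `G := ∑_{z=1}^J S_z`. -/
def Gsum (J : ℕ) (S : ℕ → Ω → ℝ) : Ω → ℝ := fun ω => ∑ z ∈ Finset.Icc 1 J, S z ω

/-- Real-valued indicator of the event `{G = g}`. -/
def indG (J : ℕ) (S : ℕ → Ω → ℝ) (g : ℕ) : Ω → ℝ :=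
  Set.indicator {ω | Gsum J S ω = (g : ℝ)} (fun _ => (1 : ℝ))

/-- Principal score of the stratum `g` : `e_g(X) := E[1(G=g) | σ(X)]`. -/
def eg (P : Measure Ω) (X : Ω → 𝒳) (J : ℕ) (S : ℕ → Ω → ℝ) (g : ℕ) : Ω → ℝ :=
  P[indG J S g | mX X]

/-- Basic setup: measurability, ranges, values and integrability of the primitives. -/
structure Setup (P : Measure Ω) (J : ℕ) (X : Ω → 𝒳) (Z : Ω → ℕ)
    (S Y : ℕ → Ω → ℝ) : Prop where
  hJ : 2 ≤ J
  hX : Measurable X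
  hZ : Measurable Z
  hZr : ∀ ω, Z ω ∈ Finset.Icc 1 J
  hSm : ∀ z, Measurable (S z)
  hS01 : ∀ z ω, S z ω = 0 ∨ S z ω = 1
  hYm : ∀ z, Measurable (Y z)
  hYint : ∀ z, Integrable (Y z) P

/-- Randomization : `Z` is independent of `(X, S_1,…,S_J, Y_1,…,Y_J)` and `π_z > 0` for all
`z ∈ {1,…,J}`. -/
def Randomization (P : Measure Ω) (J : ℕ) (X : Ω → 𝒳) (Z : Ω → ℕ)
    (S Y : ℕ → Ω → ℝ) : Prop :=
  IndepFun Z (fun ω => (X ω, fun z => S z ω, fun z => Y z ω)) P ∧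
    ∀ z ∈ Finset.Icc 1 J, 0 < piZ P Z z

/-- Monotonicity : `S_{z'} ≤ S_z` a.s. whenever `z' ≤ z`. -/
def Monotonicity (P : Measure Ω) (J : ℕ) (S : ℕ → Ω → ℝ) : Prop :=
  ∀ z ∈ Finset.Icc 1 J, ∀ z' ∈ Finset.Icc 1 J, z' ≤ z → ∀ᵐ ω ∂P, S z' ω ≤ S z ω

/-- Principal ignorability. -/
def PrincipalIgnorability (P : Measure Ω) (J : ℕ) (X : Ω → 𝒳)
    (S Y : ℕ → Ω → ℝ) : Prop :=
  ∀ z ∈ Finset.Icc 1 J, ∀ g ∈ Finset.Icc (J - z + 1) J, ∀ g' ∈ Finset.Icc (J - z + 1) J,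
    (fun ω => (P[fun ω' => Y z ω' * indG J S g ω' | mX X]) ω * eg P X J S g' ω)
      =ᵐ[P] fun ω => (P[fun ω' => Y z ω' * indG J S g' ω' | mX X]) ω * eg P X J S g ω

/-- Positivity : the principal scores are uniformly bounded away from zero. -/
def Positivity (P : Measure Ω) (J : ℕ) (X : Ω → 𝒳) (S : ℕ → Ω → ℝ) : Prop :=
  ∃ c : ℝ, 0 < c ∧ ∀ z ∈ Finset.Icc 1 J, ∀ᵐ ω ∂P, c ≤ pscore P X S J z ω

end TruncationByDeath

/-!
Since `Z` is independent of `(X, S_z)` and the observed `S` equals `S_z` on `{Z = z}`,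
`E[1(Z=z) (S - p̃(X))] = π_z E[S_z - p̃(X)]`, so the augmentation `p̃(X)` cancels in expectation,
whatever `p̃` is. Under monotonicity every survival profile `(S_1, …, S_J)` is of the form
`(0, …, 0, 1, …, 1)`, so `G = g` exactly when `S_{J-g+1} = 1` and `S_{J-g} = 0`; that is,
`1(G = g) = S_{J-g+1} - S_{J-g}` almost surely, and the second claim follows from the first.
-/

theorem eq_indicator_of_zero_or_one {α : Type*} {f : α → ℝ} (hf : ∀ a, f a = 0 ∨ f a = 1) :
    f = {a | f a = 1}.indicator 1 := by
  ext a
  rcases hf a with h | h <;> simp [h]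

section Integration

variable {Ω : Type*} [MeasurableSpace Ω] {P : Measure Ω}

theorem ProbabilityTheory.IndepFun.integrable_mul_sub_div_add
    {I W m : Ω → ℝ} (hind : IndepFun I (fun ω => W ω - m ω) P) (hI : Integrable I P)
    (hW : Integrable W P) (hm : Integrable m P) (c : ℝ) :
    Integrable (fun ω => I ω * (W ω - m ω) / c + m ω) P :=
  ((hind.integrable_mul hI (hW.sub hm)).div_const c).add hm

theorem ProbabilityTheory.IndepFun.integral_mul_sub_div_integral_add
    {I W m : Ω → ℝ} (hind : IndepFun I (fun ω => W ω - m ω) P) (hI : Integrable I P)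
    (hW : Integrable W P) (hm : Integrable m P) (hI0 : ∫ ω, I ω ∂P ≠ 0) :
    ∫ ω, I ω * (W ω - m ω) / (∫ ω, I ω ∂P) + m ω ∂P = ∫ ω, W ω ∂P := by
  have hprod : Integrable (fun ω => I ω * (W ω - m ω)) P := hind.integrable_mul hI (hW.sub hm)
  rw [integral_add (hprod.div_const _) hm, integral_div,
    hind.integral_fun_mul_eq_mul_integral hI.aestronglyMeasurable
      (hW.sub hm).aestronglyMeasurable,
    mul_div_cancel_left₀ _ hI0, integral_sub hW hm, sub_add_cancel]

theorem integrable_of_zero_or_one [IsFiniteMeasure P] {f : Ω → ℝ}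
    (hfm : Measurable f) (hf : ∀ ω, f ω = 0 ∨ f ω = 1) : Integrable f P := by
  rw [eq_indicator_of_zero_or_one hf]
  exact (integrable_const 1).indicator (hfm (measurableSet_singleton 1))

theorem integral_eq_measureReal_of_zero_or_one {f : Ω → ℝ}
    (hfm : Measurable f) (hf : ∀ ω, f ω = 0 ∨ f ω = 1) :
    ∫ ω, f ω ∂P = P.real {ω | f ω = 1} := by
  conv_lhs => rw [eq_indicator_of_zero_or_one hf]
  exact integral_indicator_one (hfm (measurableSet_singleton 1))

theorem integrable_comp_of_bounded {𝒳 : Type*} [MeasurableSpace 𝒳] [IsFiniteMeasure P]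
    {X : Ω → 𝒳} (hX : Measurable X) {f : 𝒳 → ℝ} (hf : Measurable f) (hfb : ∃ C, ∀ x, |f x| ≤ C) :
    Integrable (fun ω => f (X ω)) P :=
  let ⟨C, hC⟩ := hfb
  .of_bound (hf.comp hX).aestronglyMeasurable C (ae_of_all _ fun ω => hC (X ω))

end Integration

theorem Finset.eq_Icc_card_of_upwardClosed {T : Finset ℕ} {b : ℕ} (hTb : ∀ x ∈ T, x ≤ b)
    (hup : ∀ x ∈ T, ∀ y, x ≤ y → y ≤ b → y ∈ T) : T = Finset.Icc (b + 1 - T.card) b := by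
  rcases T.eq_empty_or_nonempty with rfl | hne
  · simp
  obtain ⟨a, ha, rfl⟩ : ∃ a ≤ b, T = Finset.Icc a b := by
    refine ⟨T.min' hne, hTb _ (T.min'_mem hne), Finset.ext fun y => ⟨fun hy => ?_, fun hy => ?_⟩⟩
    · exact Finset.mem_Icc.2 ⟨T.min'_le y hy, hTb y hy⟩
    · exact hup _ (T.min'_mem hne) y (Finset.mem_Icc.1 hy).1 (Finset.mem_Icc.1 hy).2
  rw [Nat.card_Icc, Nat.sub_sub_self (by omega)]

theorem ite_sum_eq_sub_of_monotoneOn {J : ℕ} {s : ℕ → ℝ} (h01 : ∀ z, s z = 0 ∨ s z = 1)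
    (hmono : MonotoneOn s (Finset.Icc 1 J)) {g : ℕ} (hg : g ∈ Finset.Icc 1 J) :
    (if ∑ z ∈ Finset.Icc 1 J, s z = g then (1 : ℝ) else 0)
      = s (J - g + 1) - if J - g = 0 then 0 else s (J - g) := by
  set T := (Finset.Icc 1 J).filter (fun z => s z = 1)
  have hsum : ∑ z ∈ Finset.Icc 1 J, s z = T.card := by
    rw [Finset.natCast_card_filter]
    refine Finset.sum_congr rfl fun z _ => ?_
    rcases h01 z with h | h <;> simp [h]
  have hT : T = Finset.Icc (J + 1 - T.card) J := by
    refine Finset.eq_Icc_card_of_upwardClosed (fun x hx => ?_) (fun x hx y hxy hyJ => ?_)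
    · exact (Finset.mem_Icc.1 (Finset.mem_filter.1 hx).1).2
    · obtain ⟨hxI, hx1⟩ := Finset.mem_filter.1 hx
      have hyI : y ∈ Finset.Icc 1 J := Finset.mem_Icc.2 ⟨(Finset.mem_Icc.1 hxI).1.trans hxy, hyJ⟩
      have hle := hmono hxI hyI hxy
      refine Finset.mem_filter.2 ⟨hyI, ?_⟩
      rcases h01 y with h | h <;> linarith
  have hs : ∀ z ∈ Finset.Icc 1 J, s z = if J + 1 - T.card ≤ z then 1 else 0 := by
    intro z hz
    have hmemT : z ∈ T ↔ s z = 1 := Finset.mem_filter.trans (and_iff_right hz)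
    have hmem : s z = 1 ↔ J + 1 - T.card ≤ z := by
      rw [← hmemT]
      conv_lhs => rw [hT]
      exact Finset.mem_Icc.trans (and_iff_left (Finset.mem_Icc.1 hz).2)
    split_ifs with hle
    · exact hmem.2 hle
    · exact (h01 z).resolve_right (mt hmem.1 hle)
  have hcard : T.card ≤ J := (Finset.card_filter_le _ _).trans (by simp)
  have hg' := Finset.mem_Icc.1 hg
  simp only [hsum, Nat.cast_inj]
  rw [hs (J - g + 1) (Finset.mem_Icc.2 ⟨by omega, by omega⟩)]
  by_cases h0 : J - g = 0
  · simp only [h0, if_true]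
    split_ifs <;> (try norm_num) <;> omega
  · rw [if_neg h0, hs (J - g) (Finset.mem_Icc.2 ⟨by omega, by omega⟩)]
    split_ifs <;> (try norm_num) <;> omega

namespace TruncationByDeath

section Randomized

variable {Ω : Type*} {𝒳 : Type*}

theorem indic_eq_indicator (Z : Ω → ℕ) (z : ℕ) : indic Z z = {ω | Z ω = z}.indicator 1 := by
  ext ω
  simp [indic, Set.indicator_apply]

theorem indic_mul_Sobs {J : ℕ} {Z : Ω → ℕ} (S : ℕ → Ω → ℝ) {z : ℕ} (hz : z ∈ Finset.Icc 1 J)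
    (ω : Ω) : indic Z z ω * Sobs J Z S ω = indic Z z ω * S z ω := by
  by_cases h : Z ω = z <;> simp [indic, Sobs, h, hz]

variable [MeasurableSpace Ω] {P : Measure Ω} {J : ℕ} {Z : Ω → ℕ} {S Y : ℕ → Ω → ℝ}

theorem integral_indic (hZ : Measurable Z) (z : ℕ) : ∫ ω, indic Z z ω ∂P = piZ P Z z := by
  rw [indic_eq_indicator]
  exact integral_indicator_one (hZ (measurableSet_singleton z))

theorem integrable_indic [IsFiniteMeasure P] (hZ : Measurable Z) (z : ℕ) :
    Integrable (indic Z z) P := by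
  rw [indic_eq_indicator]
  exact (integrable_const 1).indicator (hZ (measurableSet_singleton z))

theorem augmented_Sobs_eq {X : Ω → 𝒳} (pt : 𝒳 → ℝ) {z : ℕ} (hz : z ∈ Finset.Icc 1 J) :
    (fun ω => indic Z z ω * (Sobs J Z S ω - pt (X ω)) / piZ P Z z + pt (X ω))
      = fun ω => indic Z z ω * (S z ω - pt (X ω)) / piZ P Z z + pt (X ω) := by
  ext ω
  rw [mul_sub, mul_sub, indic_mul_Sobs S hz]

variable [MeasurableSpace 𝒳] {X : Ω → 𝒳}

theorem indepFun_indic_sub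
    (hind : IndepFun Z (fun ω => (X ω, fun z => S z ω, fun z => Y z ω)) P)
    {pt : 𝒳 → ℝ} (hpt : Measurable pt) (z : ℕ) :
    IndepFun (indic Z z) (fun ω => S z ω - pt (X ω)) P :=
  hind.comp (measurable_from_top (f := fun n : ℕ => if n = z then (1 : ℝ) else 0))
    (((measurable_pi_apply z).comp (measurable_fst.comp measurable_snd)).sub
      (hpt.comp measurable_fst))

variable [IsProbabilityMeasure P]

theorem integrable_augmented (hset : Setup P J X Z S Y)
    (hind : IndepFun Z (fun ω => (X ω, fun z => S z ω, fun z => Y z ω)) P)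
    {z : ℕ} (hz : z ∈ Finset.Icc 1 J) {pt : 𝒳 → ℝ} (hpt : Measurable pt)
    (hptb : ∃ C, ∀ x, |pt x| ≤ C) :
    Integrable (fun ω => indic Z z ω * (Sobs J Z S ω - pt (X ω)) / piZ P Z z + pt (X ω)) P := by
  rw [augmented_Sobs_eq pt hz]
  exact (indepFun_indic_sub hind hpt z).integrable_mul_sub_div_add (integrable_indic hset.hZ z)
    (integrable_of_zero_or_one (hset.hSm z) (hset.hS01 z))
    (integrable_comp_of_bounded hset.hX hpt hptb) _

theorem integral_augmented (hset : Setup P J X Z S Y) (hrand : Randomization P J X Z S Y)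
    {z : ℕ} (hz : z ∈ Finset.Icc 1 J) {pt : 𝒳 → ℝ} (hpt : Measurable pt)
    (hptb : ∃ C, ∀ x, |pt x| ≤ C) :
    ∫ ω, (indic Z z ω * (Sobs J Z S ω - pt (X ω)) / piZ P Z z + pt (X ω)) ∂P
      = (P {ω | S z ω = 1}).toReal := by
  have hπ : ∫ ω, indic Z z ω ∂P ≠ 0 := (integral_indic hset.hZ z).trans_ne (hrand.2 z hz).ne'
  rw [augmented_Sobs_eq pt hz, ← integral_indic hset.hZ z,
    (indepFun_indic_sub hrand.1 hpt z).integral_mul_sub_div_integral_add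
      (integrable_indic hset.hZ z) (integrable_of_zero_or_one (hset.hSm z) (hset.hS01 z))
      (integrable_comp_of_bounded hset.hX hpt hptb) hπ]
  exact integral_eq_measureReal_of_zero_or_one (hset.hSm z) (hset.hS01 z)

end Randomized

section Monotone

variable {Ω : Type*} [MeasurableSpace Ω] {P : Measure Ω} {J : ℕ} {S : ℕ → Ω → ℝ}

theorem ae_monotoneOn_of_monotonicity (hmono : Monotonicity P J S) :
    ∀ᵐ ω ∂P, MonotoneOn (fun z => S z ω) (Finset.Icc 1 J) := by
  have h : ∀ᵐ ω ∂P, ∀ z ∈ Finset.Icc 1 J, ∀ z' ∈ Finset.Icc 1 J, z' ≤ z → S z' ω ≤ S z ω := by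
    simp only [Filter.eventually_all_finset, Filter.eventually_imp_distrib_left]
    exact hmono
  filter_upwards [h] with ω hω a ha b hb hab using hω b hb a ha hab

theorem indG_ae_eq (hS01 : ∀ z ω, S z ω = 0 ∨ S z ω = 1) (hmono : Monotonicity P J S)
    {g : ℕ} (hg : g ∈ Finset.Icc 1 J) :
    indG J S g =ᵐ[P] fun ω => S (J - g + 1) ω - if J - g = 0 then 0 else S (J - g) ω := by
  filter_upwards [ae_monotoneOn_of_monotonicity hmono] with ω hω
  simpa [indG, Gsum, Set.indicator_apply] using ite_sum_eq_sub_of_monotoneOn (hS01 · ω) hω hg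

theorem measureReal_Gsum_eq [IsFiniteMeasure P] (hSm : ∀ z, Measurable (S z))
    (hS01 : ∀ z ω, S z ω = 0 ∨ S z ω = 1) (hmono : Monotonicity P J S) {g : ℕ}
    (hg : g ∈ Finset.Icc 1 J) :
    (P {ω | Gsum J S ω = g}).toReal
      = (P {ω | S (J - g + 1) ω = 1}).toReal
        - if J - g = 0 then 0 else (P {ω | S (J - g) ω = 1}).toReal := by
  have hG : MeasurableSet {ω | Gsum J S ω = g} :=
    (Finset.measurable_sum _ fun z _ => hSm z) (measurableSet_singleton _)
  have hind : ∫ ω, indG J S g ω ∂P = P.real {ω | Gsum J S ω = g} := integral_indicator_one hG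
  have hint z : Integrable (S z) P := integrable_of_zero_or_one (hSm z) (hS01 z)
  have hmeas z := integral_eq_measureReal_of_zero_or_one (P := P) (hSm z) (hS01 z)
  rw [← measureReal_def, ← hind, integral_congr_ae (indG_ae_eq hS01 hmono hg)]
  split_ifs
  · simp only [sub_zero]
    exact hmeas _
  · rw [integral_sub (hint _) (hint _), hmeas, hmeas]
    rfl

end Monotone

variable {Ω : Type*} {𝒳 : Type*} [MeasurableSpace Ω] [MeasurableSpace 𝒳]

/-- **robustness of the augmented survival estimator under randomization.**
For every `z ∈ {1,…,J}` and bounded measurable `p̃`,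
`E[1(Z=z)(S − p̃(X))/π_z + p̃(X)] = P(S_z = 1)`; if monotonicity also holds, then the
difference of two such augmented terms at levels `J−g+1` and `J−g` has expectation
`P(G=g)`, with the convention that the subtracted term is `0` when `g = J`. -/
theorem statement11 (P : Measure Ω) [IsProbabilityMeasure P] (J : ℕ)
    (X : Ω → 𝒳) (Z : Ω → ℕ) (S Y : ℕ → Ω → ℝ)
    (hset : Setup P J X Z S Y)
    (hrand : Randomization P J X Z S Y) :
    (∀ z ∈ Finset.Icc 1 J, ∀ pt : 𝒳 → ℝ, Measurable pt → (∃ C, ∀ x, |pt x| ≤ C) →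
      ∫ ω, (indic Z z ω * (Sobs J Z S ω - pt (X ω)) / piZ P Z z + pt (X ω)) ∂P
        = (P {ω | S z ω = 1}).toReal) ∧
    (Monotonicity P J S →
      ∀ g ∈ Finset.Icc 1 J, ∀ pt pt' : 𝒳 → ℝ,
        Measurable pt → (∃ C, ∀ x, |pt x| ≤ C) →
        Measurable pt' → (∃ C, ∀ x, |pt' x| ≤ C) →
        ∫ ω,
          ((indic Z (J - g + 1) ω * (Sobs J Z S ω - pt (X ω)) / piZ P Z (J - g + 1)
              + pt (X ω))
            - (if J - g = 0 then 0
              else indic Z (J - g) ω * (Sobs J Z S ω - pt' (X ω)) / piZ P Z (J - g)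
                + pt' (X ω))) ∂P
          = (P {ω | Gsum J S ω = (g : ℝ)}).toReal) := by
  refine ⟨fun z hz pt hpt hptb => integral_augmented hset hrand hz hpt hptb, ?_⟩
  intro hmono g hg pt pt' hpt hptb hpt' hptb'
  have hg' := Finset.mem_Icc.1 hg
  have hupper : J - g + 1 ∈ Finset.Icc 1 J := Finset.mem_Icc.2 ⟨by omega, by omega⟩
  rw [measureReal_Gsum_eq hset.hSm hset.hS01 hmono hg]
  split_ifs with h0
  · simpa using integral_augmented hset hrand hupper hpt hptb
  · have hlower : J - g ∈ Finset.Icc 1 J := Finset.mem_Icc.2 ⟨by omega, by omega⟩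
    rw [integral_sub (integrable_augmented hset hrand.1 hupper hpt hptb)
        (integrable_augmented hset hrand.1 hlower hpt' hptb'),
      integral_augmented hset hrand hupper hpt hptb,
      integral_augmented hset hrand hlower hpt' hptb']

end TruncationByDeath
end
end

section
/- (Population triple robustness, Proposition 2.) Fix z ∈ {1,...,J} and g ∈ {J−z+1,...,J}. Let π̃_w, p̃_w : 𝒳 → [c, 1−c] for w ∈ {J−g, J−g+1, z} (with c ∈ (0, 1/2)) and m̃_z : 𝒳 → ℝ be bounded measurable working functions, with the convention p̃_0 := 0. Define ψ̃_{S,w} := 1(Z=w)·(S − p̃_w(X))/π̃_w(X) + p̃_w(X) (with ψ̃_{S,0} := 0) and ξ̃ := ((p̃_{J−g+1}(X) − p̃_{J−g}(X))/p̃_z(X))·1(Z=z)·S·(Y − m̃_z(X))/π̃_z(X) + m̃_z(X)·(ψ̃_{S,J−g+1} − ψ̃_{S,J−g}). If at least two of the following three conditions hold: (i) π̃_w(X) = π_w(X) P-a.s. for all w ∈ {J−g, J−g+1, z}; (ii) p̃_w(X) = p_w(X) P-a.s. for all w ∈ {J−g, J−g+1, z}; (iii) m̃_z(X) = m_z(X)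 P-a.s.; then, under treatment ignorability, monotonicity, principal ignorability and positivity: E[ξ̃] = E[Y_z·1(G=g)] and E[ψ̃_{S,J−g+1} − ψ̃_{S,J−g}] = P(G=g). -/
/-!
Under monotonicity the survival profile is a threshold in the stratum `G`, so
`1(G = g) = S_{J-g+1} - S_{J-g}` and `e_g = p_{J-g+1} - p_{J-g}`; summing principal ignorability
over the strata that survive under `z` gives `E[Y_z 1(G = g) | X] = m_z e_g`.
Treatment ignorability turns every observed-data term into σ(X)-measurable nuisances:
`E[ψ̃_{S,w} | X] = π_w (p_w - p̃_w) / π̃_w + p̃_w`, which is `p_w` once `π̃_w` or `p̃_w` is correct,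
and `E[ξ̃ | X] = (p̃_{J-g+1} - p̃_{J-g}) / (p̃_z π̃_z) ⬝ (m_z - m̃_z) π_z p_z + m̃_z e_g`, which is
`m_z e_g` once the outcome model or both score models are correct. Integrating these conditional
expectations gives both identities.
-/

open MeasureTheory ProbabilityTheory

noncomputable section

namespace TruncationByDeath

variable {Ω : Type*} {𝒳 : Type*} [MeasurableSpace Ω] [MeasurableSpace 𝒳]

/-- Basic setup with bounded potential outcomes (observational setting). -/
structure SetupB (P : Measure Ω) (J : ℕ) (X : Ω → 𝒳) (Z : Ω → ℕ)
    (S Y : ℕ → Ω → ℝ) : Prop where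
  hJ : 2 ≤ J
  hX : Measurable X
  hZ : Measurable Z
  hZr : ∀ ω, Z ω ∈ Finset.Icc 1 J
  hSm : ∀ z, Measurable (S z)
  hS01 : ∀ z ω, S z ω = 0 ∨ S z ω = 1
  hYm : ∀ z, Measurable (Y z)
  hYbd : ∃ C, ∀ z ω, |Y z ω| ≤ C

/-- Generalized propensity score `π_z(X) := E[1(Z=z) | σ(X)]`. -/
def piX (P : Measure Ω) (X : Ω → 𝒳) (Z : Ω → ℕ) (z : ℕ) : Ω → ℝ :=
  P[indic Z z | mX X]

/-- Treatment ignorability in the observational setting: the generalized propensity scores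
are bounded away from zero, and conditionally on `σ(X)` the treatment indicator factorizes
from any bounded measurable functional of the potential values. -/
def TreatmentIgnorability (P : Measure Ω) (J : ℕ) (X : Ω → 𝒳) (Z : Ω → ℕ)
    (S Y : ℕ → Ω → ℝ) : Prop :=
  (∃ c : ℝ, 0 < c ∧ ∀ z ∈ Finset.Icc 1 J, ∀ᵐ ω ∂P, c ≤ piX P X Z z ω) ∧
  ∀ z ∈ Finset.Icc 1 J, ∀ φ : (ℕ → ℝ) → (ℕ → ℝ) → ℝ,
    Measurable (Function.uncurry φ) → (∃ C, ∀ s y, |φ s y| ≤ C) →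
    P[fun ω => indic Z z ω * φ (fun w => S w ω) (fun w => Y w ω) | mX X]
      =ᵐ[P] fun ω => piX P X Z z ω
        * (P[fun ω' => φ (fun w => S w ω') (fun w => Y w ω') | mX X]) ω

/-- Working principal score `p̃_w(X)`, with the convention `p̃_0 := 0`. -/
def workP (X : Ω → 𝒳) (pt : ℕ → 𝒳 → ℝ) (w : ℕ) : Ω → ℝ :=
  if w = 0 then fun _ => 0 else fun ω => pt w (X ω)

/-- Augmented survival term built from working principal scores and working propensity
scores, with `ψ̃_{S,0} := 0`. -/
def psiSWO (P : Measure Ω) (X : Ω → 𝒳) (Z : Ω → ℕ) (S : ℕ → Ω → ℝ) (J : ℕ)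
    (pt πt : ℕ → 𝒳 → ℝ) (w : ℕ) : Ω → ℝ :=
  if w = 0 then fun _ => 0
  else fun ω =>
    indic Z w ω * (Sobs J Z S ω - workP X pt w ω) / πt w (X ω) + workP X pt w ω

end TruncationByDeath

namespace MeasureTheory

variable {Ω : Type*} {m m₀ : MeasurableSpace Ω} {μ : Measure Ω} {W W' V V' f : Ω → ℝ}

structure HasCondExp (m : MeasurableSpace Ω) (μ : Measure[m₀] Ω) (W V : Ω → ℝ) : Prop where
  integrable : Integrable W μ
  condExp_ae_eq : μ[W|m] =ᵐ[μ] V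

lemma hasCondExp_condExp (hW : Integrable W μ) : HasCondExp m μ W (μ[W|m]) :=
  ⟨hW, .rfl⟩

lemma hasCondExp_of_stronglyMeasurable (hm : m ≤ m₀) [SigmaFinite (μ.trim hm)]
    (hf : StronglyMeasurable[m] f) (hfi : Integrable f μ) : HasCondExp m μ f f :=
  ⟨hfi, by rw [condExp_of_stronglyMeasurable hm hf hfi]⟩

namespace HasCondExp

lemma congr (h : HasCondExp m μ W V) (hW : W =ᵐ[μ] W') (hV : V =ᵐ[μ] V') :
    HasCondExp m μ W' V' :=
  ⟨h.integrable.congr hW, (condExp_congr_ae hW.symm).trans (h.condExp_ae_eq.trans hV)⟩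

lemma add (h : HasCondExp m μ W V) (h' : HasCondExp m μ W' V') :
    HasCondExp m μ (W + W') (V + V') :=
  ⟨h.integrable.add h'.integrable,
    (condExp_add h.integrable h'.integrable m).trans (h.condExp_ae_eq.add h'.condExp_ae_eq)⟩

lemma sub (h : HasCondExp m μ W V) (h' : HasCondExp m μ W' V') :
    HasCondExp m μ (W - W') (V - V') :=
  ⟨h.integrable.sub h'.integrable,
    (condExp_sub h.integrable h'.integrable m).trans (h.condExp_ae_eq.sub h'.condExp_ae_eq)⟩

lemma mul_left (h : HasCondExp m μ W V) (hm : m ≤ m₀) (hf : StronglyMeasurable[m] f) {C : ℝ}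
    (hfC : ∀ ω, |f ω| ≤ C) : HasCondExp m μ (f * W) (f * V) := by
  have hfW : Integrable (f * W) μ :=
    h.integrable.bdd_mul (hf.mono hm).aestronglyMeasurable (.of_forall hfC)
  exact ⟨hfW, (condExp_mul_of_stronglyMeasurable_left hf hfW h.integrable).trans
    h.condExp_ae_eq.mul_left⟩

lemma integral_eq (h : HasCondExp m μ W V) (hm : m ≤ m₀) [SigmaFinite (μ.trim hm)] :
    ∫ ω, W ω ∂μ = ∫ ω, V ω ∂μ := by
  rw [← integral_condExp hm, integral_congr_ae h.condExp_ae_eq]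

end HasCondExp

lemma ae_eq_of_mul_left_ae_eq {a : Ω → ℝ} {c : ℝ} (hc : 0 < c) (ha : ∀ᵐ ω ∂μ, c ≤ a ω)
    (h : (fun ω => a ω * W ω) =ᵐ[μ] fun ω => a ω * V ω) : W =ᵐ[μ] V := by
  filter_upwards [ha, h] with ω hω hWV
  exact mul_left_cancel₀ (hc.trans_le hω).ne' hWV

end MeasureTheory

lemma abs_mul_le_of_abs_le_one {a b C : ℝ} (ha : |a| ≤ 1) (hb : |b| ≤ C) : |a * b| ≤ C := by
  rw [abs_mul]
  nlinarith [abs_nonneg a, abs_nonneg b]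

lemma abs_le_one_of_mem_Icc {a c : ℝ} (hc : 0 ≤ c) (ha : a ∈ Set.Icc c (1 - c)) : |a| ≤ 1 :=
  abs_le.mpr ⟨by linarith [ha.1], by linarith [ha.2]⟩

lemma abs_inv_le_inv_of_le {x c : ℝ} (hc : 0 < c) (h : c ≤ x) : |x⁻¹| ≤ c⁻¹ := by
  rw [abs_inv, abs_of_pos (hc.trans_le h)]
  exact inv_anti₀ hc h

section ZeroOne

open Finset

variable {J : ℕ} {f : ℕ → ℝ}

lemma sum_eq_card_of_zero_one {s : Finset ℕ} (h01 : ∀ w ∈ s, f w = 0 ∨ f w = 1) :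
    ∑ w ∈ s, f w = #{w ∈ s | f w = 1} := by
  rw [← sum_boole]
  refine sum_congr rfl fun w hw => ?_
  rcases h01 w hw with h | h <;> simp [h]

lemma eq_ite_of_monotoneOn_zero_one (h01 : ∀ w ∈ Icc 1 J, f w = 0 ∨ f w = 1)
    (hf : MonotoneOn f (Icc 1 J)) {w : ℕ} (hw : w ∈ Icc 1 J) :
    f w = if J < w + #{u ∈ Icc 1 J | f u = 1} then 1 else 0 := by
  obtain ⟨hw1, hwJ⟩ := mem_Icc.mp hw
  rcases h01 w hw with h0 | h1
  · have hsub : {u ∈ Icc 1 J | f u = 1} ⊆ Icc (w + 1) J := by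
      intro u hu
      obtain ⟨hu, hfu⟩ := mem_filter.mp hu
      refine mem_Icc.mpr ⟨Nat.lt_of_not_le fun huw => ?_, (mem_Icc.mp hu).2⟩
      have := hf (mem_coe.mpr hu) (mem_coe.mpr hw) huw
      linarith
    have := card_le_card hsub
    rw [Nat.card_Icc] at this
    rw [h0, if_neg (by omega)]
  · have hsub : Icc w J ⊆ {u ∈ Icc 1 J | f u = 1} := by
      intro u hu
      obtain ⟨hwu, huJ⟩ := mem_Icc.mp hu
      have hu' : u ∈ Icc 1 J := mem_Icc.mpr ⟨hw1.trans hwu, huJ⟩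
      have := hf (mem_coe.mpr hw) (mem_coe.mpr hu') hwu
      refine mem_filter.mpr ⟨hu', ?_⟩
      rcases h01 u hu' with h | h <;> linarith
    have := card_le_card hsub
    rw [Nat.card_Icc] at this
    rw [h1, if_pos (by omega)]

end ZeroOne

namespace TruncationByDeath

open Finset

section Pointwise

variable {Ω 𝒳 : Type*} {J : ℕ} {Z : Ω → ℕ} {S : ℕ → Ω → ℝ} {X : Ω → 𝒳} {pt : ℕ → 𝒳 → ℝ} {w : ℕ}

lemma measurable_mX_comp [MeasurableSpace 𝒳] {φ : 𝒳 → ℝ} (hφ : Measurable φ) :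
    Measurable[mX X] fun ω => φ (X ω) :=
  hφ.comp (comap_measurable X)

lemma abs_indic_le_one (Z : Ω → ℕ) (z : ℕ) (ω : Ω) : |indic Z z ω| ≤ 1 := by
  unfold indic; split_ifs <;> simp

lemma indic_mul_apply_self (F : ℕ → Ω → ℝ) (z : ℕ) (ω : Ω) :
    indic Z z ω * F (Z ω) ω = indic Z z ω * F z ω := by
  unfold indic; split_ifs with h <;> simp [h]

lemma sum_indic_mul (hZ : ∀ ω, Z ω ∈ Icc 1 J) (F : ℕ → Ω → ℝ) (ω : Ω) :
    ∑ z ∈ Icc 1 J, indic Z z ω * F z ω = F (Z ω) ω := by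
  rw [sum_eq_single_of_mem (Z ω) (hZ ω) fun z _ hz => by simp [indic, Ne.symm hz]]
  simp [indic]

lemma indG_apply (g : ℕ) (ω : Ω) : indG J S g ω = if Gsum J S ω = g then 1 else 0 := by
  simp [indG, Set.indicator_apply]

lemma abs_indG_le_one (g : ℕ) (ω : Ω) : |indG J S g ω| ≤ 1 := by
  rw [indG_apply]; split_ifs <;> simp

lemma measurable_workP [MeasurableSpace 𝒳] (hpt : Measurable (pt w)) :
    Measurable[mX X] (workP X pt w) := by
  unfold workP; split_ifs
  exacts [measurable_const, measurable_mX_comp hpt]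

lemma abs_workP_le_one {cw : ℝ} (hcw : 0 ≤ cw)
    (hpt : w ≠ 0 → ∀ x, pt w x ∈ Set.Icc cw (1 - cw)) (ω : Ω) : |workP X pt w ω| ≤ 1 := by
  unfold workP; split_ifs with hw
  · simp
  · exact abs_le_one_of_mem_Icc hcw (hpt hw (X ω))

lemma psiSWO_zero [MeasurableSpace Ω] {P : Measure Ω} {πt : ℕ → 𝒳 → ℝ} :
    psiSWO P X Z S J pt πt 0 = 0 := by
  simp [psiSWO]; rfl

end Pointwise

variable {Ω : Type*} {𝒳 : Type*} [MeasurableSpace Ω] [MeasurableSpace 𝒳]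

section Basic

variable {P : Measure Ω} {J : ℕ} {X : Ω → 𝒳} {Z : Ω → ℕ} {S Y : ℕ → Ω → ℝ} {w : ℕ}

lemma mX_le (hX : Measurable X) : mX X ≤ ‹MeasurableSpace Ω› :=
  hX.comap_le

lemma integrable_of_abs_le [IsFiniteMeasure P] {f : Ω → ℝ} (hf : Measurable f) {C : ℝ}
    (hC : ∀ ω, |f ω| ≤ C) : Integrable f P :=
  .of_bound hf.aestronglyMeasurable C (.of_forall hC)

lemma measurable_indic (hZ : Measurable Z) (z : ℕ) : Measurable (indic Z z) :=
  Measurable.ite (hZ (measurableSet_singleton z)) measurable_const measurable_const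

lemma pscore_zero : pscore P X S J 0 = 0 := by
  simp [pscore]; rfl

lemma pscore_of_mem_Icc (hw : w ∈ Icc 1 J) : pscore P X S J w = P[S w|mX X] := by
  obtain ⟨h1, hJ⟩ := mem_Icc.mp hw
  rw [pscore, if_neg (by omega), if_neg (by omega)]

end Basic

section Model

variable {P : Measure Ω} {J : ℕ} {X : Ω → 𝒳} {Z : Ω → ℕ} {S Y : ℕ → Ω → ℝ} {w z : ℕ}
  {πt pt : ℕ → 𝒳 → ℝ}

namespace SetupB

variable (hset : SetupB P J X Z S Y)
include hset

lemma abs_S_le_one (w : ℕ) (ω : Ω) : |S w ω| ≤ 1 := by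
  rcases hset.hS01 w ω with h | h <;> simp [h]

lemma integrable_S [IsFiniteMeasure P] (w : ℕ) : Integrable (S w) P :=
  integrable_of_abs_le (hset.hSm w) (hset.abs_S_le_one w)

lemma measurable_Gsum : Measurable (Gsum J S) :=
  Finset.measurable_sum _ fun w _ => hset.hSm w

lemma measurable_indG (g : ℕ) : Measurable (indG J S g) :=
  measurable_const.indicator (hset.measurable_Gsum (measurableSet_singleton _))

lemma integral_indG (g : ℕ) :
    ∫ ω, indG J S g ω ∂P = (P {ω | Gsum J S ω = (g : ℝ)}).toReal :=
  integral_indicator_one (hset.measurable_Gsum (measurableSet_singleton _))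

lemma integrable_indG [IsFiniteMeasure P] (g : ℕ) : Integrable (indG J S g) P :=
  integrable_of_abs_le (hset.measurable_indG g) (abs_indG_le_one g)

lemma integrable_Y_mul_indG [IsFiniteMeasure P] (z g : ℕ) :
    Integrable (fun ω => Y z ω * indG J S g ω) P := by
  obtain ⟨C, hC⟩ := hset.hYbd
  exact integrable_of_abs_le ((hset.hYm z).mul (hset.measurable_indG g)) fun ω => by
    rw [mul_comm]; exact abs_mul_le_of_abs_le_one (abs_indG_le_one g ω) (hC z ω)

lemma integrable_indic [IsFiniteMeasure P] (w : ℕ) : Integrable (indic Z w) P :=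
  integrable_of_abs_le (measurable_indic hset.hZ w) (abs_indic_le_one Z w)

lemma Sobs_eq (ω : Ω) : Sobs J Z S ω = S (Z ω) ω :=
  sum_indic_mul hset.hZr S ω

lemma Yobs_eq (ω : Ω) : Yobs J Z Y ω = Y (Z ω) ω :=
  sum_indic_mul hset.hZr Y ω

lemma measurable_Sobs : Measurable (Sobs J Z S) :=
  Finset.measurable_sum _ fun w _ => (measurable_indic hset.hZ w).mul (hset.hSm w)

lemma measurable_Yobs : Measurable (Yobs J Z Y) :=
  Finset.measurable_sum _ fun w _ => (measurable_indic hset.hZ w).mul (hset.hYm w)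

lemma indic_mul_Sobs (ω : Ω) : indic Z w ω * Sobs J Z S ω = indic Z w ω * S w ω := by
  rw [hset.Sobs_eq, indic_mul_apply_self]

lemma indic_mul_Sobs_mul_Yobs (ω : Ω) :
    indic Z w ω * Sobs J Z S ω * Yobs J Z Y ω = indic Z w ω * (S w ω * Y w ω) := by
  rw [hset.indic_mul_Sobs, hset.Yobs_eq, mul_assoc, mul_left_comm, indic_mul_apply_self,
    mul_left_comm]

end SetupB

lemma TreatmentIgnorability.condExp_indic_mul (hTI : TreatmentIgnorability P J X Z S Y)
    (hz : z ∈ Icc 1 J) {φ : ℝ → ℝ → ℝ} (hφ : Measurable (Function.uncurry φ)) {C : ℝ}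
    (hC : ∀ ω, |φ (S z ω) (Y z ω)| ≤ C) :
    P[fun ω => indic Z z ω * φ (S z ω) (Y z ω)|mX X]
      =ᵐ[P] fun ω => piX P X Z z ω * P[fun ω => φ (S z ω) (Y z ω)|mX X] ω := by
  -- truncating at `C` makes `φ` bounded without changing it on the range of `(S_z, Y_z)`
  let ψ : (ℕ → ℝ) → (ℕ → ℝ) → ℝ := fun s y => max (-C) (min (φ (s z) (y z)) C)
  have hφz : Measurable fun a : (ℕ → ℝ) × (ℕ → ℝ) => φ (a.1 z) (a.2 z) :=
    hφ.comp (f := fun a : (ℕ → ℝ) × (ℕ → ℝ) => (a.1 z, a.2 z)) (by fun_prop)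
  have hψm : Measurable (Function.uncurry ψ) := measurable_const.max (hφz.min measurable_const)
  have hψb : ∀ s y, |ψ s y| ≤ |C| := fun s y =>
    abs_le.mpr ⟨(neg_le_neg (le_abs_self C)).trans (le_max_left _ _),
      max_le (neg_le_abs C) ((min_le_right _ _).trans (le_abs_self C))⟩
  have hψ : ∀ ω, ψ (fun w => S w ω) (fun w => Y w ω) = φ (S z ω) (Y z ω) := fun ω => by
    obtain ⟨h₁, h₂⟩ := abs_le.mp (hC ω)
    simp only [ψ, min_eq_left h₂, max_eq_right h₁]
  simpa only [hψ] using hTI.2 z hz ψ hψm ⟨|C|, hψb⟩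

lemma hasCondExp_indic_mul_Sobs [IsFiniteMeasure P] (hset : SetupB P J X Z S Y)
    (hTI : TreatmentIgnorability P J X Z S Y) (hw : w ∈ Icc 1 J) :
    HasCondExp (mX X) P (fun ω => indic Z w ω * Sobs J Z S ω)
      (fun ω => piX P X Z w ω * pscore P X S J w ω) := by
  simp_rw [hset.indic_mul_Sobs, pscore_of_mem_Icc hw]
  refine ⟨integrable_of_abs_le ((measurable_indic hset.hZ w).mul (hset.hSm w)) fun ω =>
      abs_mul_le_of_abs_le_one (abs_indic_le_one Z w ω) (hset.abs_S_le_one w ω),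
    hTI.condExp_indic_mul hw (φ := fun s _ => s) measurable_fst (hset.abs_S_le_one w)⟩

lemma hasCondExp_indic_mul_Sobs_mul_Yobs [IsFiniteMeasure P] (hset : SetupB P J X Z S Y)
    {mz : Ω → ℝ}
    (hmz : (fun ω => mz ω * piX P X Z z ω * pscore P X S J z ω)
      =ᵐ[P] P[fun ω => Yobs J Z Y ω * Sobs J Z S ω * indic Z z ω|mX X]) :
    HasCondExp (mX X) P (fun ω => indic Z z ω * Sobs J Z S ω * Yobs J Z Y ω)
      (fun ω => mz ω * piX P X Z z ω * pscore P X S J z ω) := by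
  obtain ⟨C, hC⟩ := hset.hYbd
  have hmeas := ((measurable_indic hset.hZ z).mul hset.measurable_Sobs).mul hset.measurable_Yobs
  refine ⟨integrable_of_abs_le (C := C) hmeas fun ω => ?_, ?_⟩
  · rw [hset.indic_mul_Sobs_mul_Yobs]
    exact abs_mul_le_of_abs_le_one (abs_indic_le_one Z z ω)
      (abs_mul_le_of_abs_le_one (hset.abs_S_le_one z ω) (hC z ω))
  · have hcomm : (fun ω => indic Z z ω * Sobs J Z S ω * Yobs J Z Y ω)
        = fun ω => Yobs J Z Y ω * Sobs J Z S ω * indic Z z ω := funext fun ω => by ring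
    rw [hcomm]
    exact hmz.symm

lemma condExp_S_mul_Y_ae_eq (hset : SetupB P J X Z S Y)
    (hTI : TreatmentIgnorability P J X Z S Y)
    (hz : z ∈ Icc 1 J) {mz : Ω → ℝ}
    (hmz : (fun ω => mz ω * piX P X Z z ω * pscore P X S J z ω)
      =ᵐ[P] P[fun ω => Yobs J Z Y ω * Sobs J Z S ω * indic Z z ω|mX X]) :
    P[fun ω => S z ω * Y z ω|mX X] =ᵐ[P] fun ω => mz ω * pscore P X S J z ω := by
  obtain ⟨C, hC⟩ := hset.hYbd
  obtain ⟨c, hc, hπ⟩ := hTI.1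
  have hSY : ∀ ω, |S z ω * Y z ω| ≤ C := fun ω =>
    abs_mul_le_of_abs_le_one (hset.abs_S_le_one z ω) (hC z ω)
  have hobs : P[fun ω => indic Z z ω * (S z ω * Y z ω)|mX X]
      = P[fun ω => Yobs J Z Y ω * Sobs J Z S ω * indic Z z ω|mX X] := by
    congr 1; funext ω; rw [← hset.indic_mul_Sobs_mul_Yobs]; ring
  refine ae_eq_of_mul_left_ae_eq hc (hπ z hz) ?_
  filter_upwards [hTI.condExp_indic_mul hz (φ := (· * ·)) measurable_mul hSY, hmz]
    with ω hTIω hmzω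
  rw [← hTIω, hobs, ← hmzω]
  ring

lemma Monotonicity.ae_monotoneOn (hmono : Monotonicity P J S) :
    ∀ᵐ ω ∂P, MonotoneOn (fun w => S w ω) (Icc 1 J) := by
  have h : ∀ᵐ ω ∂P, ∀ w ∈ Icc 1 J, ∀ w' ∈ Icc 1 J, w' ≤ w → S w' ω ≤ S w ω :=
    (Filter.eventually_all_finset _).mpr fun w hw => (Filter.eventually_all_finset _).mpr
      fun w' hw' => Filter.eventually_imp_distrib_left.mpr (hmono w hw w' hw')
  filter_upwards [h] with ω hω a ha b hb hab
  exact hω b (mem_coe.mp hb) a (mem_coe.mp ha) hab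

lemma ae_S_eq_ite_Gsum (hS01 : ∀ w ω, S w ω = 0 ∨ S w ω = 1) (hmono : Monotonicity P J S) :
    ∀ᵐ ω ∂P, ∃ k ≤ J, Gsum J S ω = k ∧ ∀ w ∈ Icc 1 J, S w ω = if J < w + k then 1 else 0 := by
  filter_upwards [hmono.ae_monotoneOn] with ω hω
  refine ⟨#{u ∈ Icc 1 J | S u ω = 1}, ?_, sum_eq_card_of_zero_one fun w _ => hS01 w ω,
    fun w hw => eq_ite_of_monotoneOn_zero_one (fun w _ => hS01 w ω) hω hw⟩
  simpa using card_filter_le (Icc 1 J) fun u => S u ω = 1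

lemma indG_ae_eq_sub (hS01 : ∀ w ω, S w ω = 0 ∨ S w ω = 1) (hmono : Monotonicity P J S)
    {g : ℕ} (hg : g ∈ Icc 1 J) :
    indG J S g =ᵐ[P] fun ω => S (J - g + 1) ω - if J - g = 0 then 0 else S (J - g) ω := by
  obtain ⟨hg1, hgJ⟩ := mem_Icc.mp hg
  filter_upwards [ae_S_eq_ite_Gsum hS01 hmono] with ω ⟨k, hkJ, hG, hS⟩
  simp only [indG_apply, hG, Nat.cast_inj]
  rw [hS (J - g + 1) (mem_Icc.mpr ⟨by omega, by omega⟩)]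
  by_cases h0 : J - g = 0
  · simp only [h0, if_true]
    split_ifs <;> first | omega | norm_num
  · rw [if_neg h0, hS (J - g) (mem_Icc.mpr ⟨by omega, by omega⟩)]
    split_ifs <;> first | omega | norm_num

lemma S_ae_eq_sum_indG (hS01 : ∀ w ω, S w ω = 0 ∨ S w ω = 1) (hmono : Monotonicity P J S)
    (hz : z ∈ Icc 1 J) : S z =ᵐ[P] ∑ g ∈ Icc (J - z + 1) J, indG J S g := by
  obtain ⟨hz1, hzJ⟩ := mem_Icc.mp hz
  filter_upwards [ae_S_eq_ite_Gsum hS01 hmono] with ω ⟨k, hkJ, hG, hS⟩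
  simp only [Finset.sum_apply, indG_apply, hG, Nat.cast_inj, sum_ite_eq, hS z hz, mem_Icc]
  split_ifs <;> first | rfl | omega

lemma eg_ae_eq_pscore_sub [IsFiniteMeasure P] (hset : SetupB P J X Z S Y)
    (hmono : Monotonicity P J S) {g : ℕ} (hg : g ∈ Icc 1 J) :
    eg P X J S g =ᵐ[P] pscore P X S J (J - g + 1) - pscore P X S J (J - g) := by
  obtain ⟨hg1, hgJ⟩ := mem_Icc.mp hg
  refine (condExp_congr_ae (indG_ae_eq_sub hset.hS01 hmono hg)).trans ?_
  rw [pscore_of_mem_Icc (mem_Icc.mpr ⟨by omega, by omega⟩)]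
  by_cases h0 : J - g = 0
  · simp only [h0, if_true, sub_zero, pscore_zero]
    exact .rfl
  · simp only [h0, if_false]
    rw [pscore_of_mem_Icc (mem_Icc.mpr ⟨by omega, by omega⟩)]
    exact condExp_sub (hset.integrable_S _) (hset.integrable_S _) _

lemma sum_eg_ae_eq_pscore [IsFiniteMeasure P] (hset : SetupB P J X Z S Y)
    (hmono : Monotonicity P J S) (hz : z ∈ Icc 1 J) :
    ∑ g ∈ Icc (J - z + 1) J, eg P X J S g =ᵐ[P] pscore P X S J z := by
  rw [pscore_of_mem_Icc hz]
  exact (condExp_finsetSum (fun g _ => hset.integrable_indG g) _).symm.trans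
    (condExp_congr_ae (S_ae_eq_sum_indG hset.hS01 hmono hz).symm)

lemma sum_condExp_Y_mul_indG_ae_eq [IsFiniteMeasure P] (hset : SetupB P J X Z S Y)
    (hmono : Monotonicity P J S) (hz : z ∈ Icc 1 J) :
    ∑ g ∈ Icc (J - z + 1) J, P[fun ω => Y z ω * indG J S g ω|mX X]
      =ᵐ[P] P[fun ω => S z ω * Y z ω|mX X] := by
  refine (condExp_finsetSum (fun g _ => hset.integrable_Y_mul_indG z g) _).symm.trans
    (condExp_congr_ae ?_)
  filter_upwards [S_ae_eq_sum_indG hset.hS01 hmono hz] with ω hω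
  rw [hω, Finset.sum_apply, Finset.sum_apply, sum_mul]
  exact sum_congr rfl fun g _ => mul_comm _ _

lemma hasCondExp_Y_mul_indG [IsFiniteMeasure P] (hset : SetupB P J X Z S Y)
    (hTI : TreatmentIgnorability P J X Z S Y) (hmono : Monotonicity P J S)
    (hPI : PrincipalIgnorability P J X S Y) (hpos : Positivity P J X S)
    (hz : z ∈ Icc 1 J) {g : ℕ} (hg : g ∈ Icc (J - z + 1) J) {mz : Ω → ℝ}
    (hmz : (fun ω => mz ω * piX P X Z z ω * pscore P X S J z ω)
      =ᵐ[P] P[fun ω => Yobs J Z Y ω * Sobs J Z S ω * indic Z z ω|mX X]) :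
    HasCondExp (mX X) P (fun ω => Y z ω * indG J S g ω) (fun ω => mz ω * eg P X J S g ω) := by
  refine ⟨hset.integrable_Y_mul_indG z g, ?_⟩
  obtain ⟨c, hc, hp⟩ := hpos
  let A : ℕ → Ω → ℝ := fun g' => P[fun ω => Y z ω * indG J S g' ω|mX X]
  have hPIall : ∀ᵐ ω ∂P, ∀ g' ∈ Icc (J - z + 1) J,
      A g ω * eg P X J S g' ω = A g' ω * eg P X J S g ω :=
    (Filter.eventually_all_finset _).mpr fun g' hg' => hPI z hz g hg g' hg'
  refine ae_eq_of_mul_left_ae_eq hc (hp z hz) ?_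
  filter_upwards [hPIall, sum_eg_ae_eq_pscore hset hmono hz,
    sum_condExp_Y_mul_indG_ae_eq hset hmono hz, condExp_S_mul_Y_ae_eq hset hTI hz hmz]
    with ω hPIω heω hAω hSYω
  -- principal ignorability, summed over the strata `g'` that survive under treatment `z`
  calc pscore P X S J z ω * A g ω
      = ∑ g' ∈ Icc (J - z + 1) J, A g ω * eg P X J S g' ω := by
        rw [← heω, Finset.sum_apply, mul_comm, mul_sum]
    _ = (∑ g' ∈ Icc (J - z + 1) J, A g' ω) * eg P X J S g ω := by
        rw [sum_mul]; exact sum_congr rfl hPIω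
    _ = pscore P X S J z ω * (mz ω * eg P X J S g ω) := by
        rw [← Finset.sum_apply, hAω, hSYω]; ring

lemma hasCondExp_psiSWO [IsFiniteMeasure P] (hset : SetupB P J X Z S Y)
    (hTI : TreatmentIgnorability P J X Z S Y) (hw : w ∈ Icc 1 J) {c C : ℝ} (hc : 0 < c)
    (hπm : Measurable (πt w)) (hπ : ∀ x, c ≤ πt w x) (hpm : Measurable (pt w))
    (hp : ∀ x, |pt w x| ≤ C)
    (hcorrect : (fun ω => πt w (X ω)) =ᵐ[P] piX P X Z w ∨ workP X pt w =ᵐ[P] pscore P X S J w) :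
    HasCondExp (mX X) P (psiSWO P X Z S J pt πt w) (pscore P X S J w) := by
  have hw0 : w ≠ 0 := Nat.one_le_iff_ne_zero.mp (mem_Icc.mp hw).1
  have hm := mX_le hset.hX
  have hinv : ∀ ω, |(πt w (X ω))⁻¹| ≤ c⁻¹ := fun ω => abs_inv_le_inv_of_le hc (hπ (X ω))
  have h₁ := (hasCondExp_indic_mul_Sobs hset hTI hw).mul_left hm
    (f := fun ω => (πt w (X ω))⁻¹) (measurable_mX_comp hπm.inv).stronglyMeasurable hinv
  have hπX : HasCondExp (mX X) P (indic Z w) (piX P X Z w) :=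
    hasCondExp_condExp (hset.integrable_indic w)
  have h₂ := hπX.mul_left hm
    (f := fun ω => pt w (X ω) * (πt w (X ω))⁻¹)
    (measurable_mX_comp (hpm.mul hπm.inv)).stronglyMeasurable (C := C * c⁻¹) fun ω => by
      rw [abs_mul]
      exact mul_le_mul (hp (X ω)) (hinv ω) (abs_nonneg _) ((abs_nonneg _).trans (hp (X ω)))
  have h₃ := hasCondExp_of_stronglyMeasurable (μ := P) hm
    (measurable_mX_comp hpm).stronglyMeasurable
    (integrable_of_abs_le (hpm.comp hset.hX) fun ω => hp (X ω))
  refine ((h₁.sub h₂).add h₃).congr (.of_forall fun ω => ?_) ?_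
  · simp only [Pi.add_apply, Pi.sub_apply, Pi.mul_apply, psiSWO, workP, if_neg hw0]
    ring
  · rcases hcorrect with hπc | hpc
    · filter_upwards [hπc] with ω hω
      have hne : πt w (X ω) ≠ 0 := (hc.trans_le (hπ (X ω))).ne'
      simp only [Pi.add_apply, Pi.sub_apply, Pi.mul_apply, ← hω]
      field_simp
      ring
    · filter_upwards [hpc] with ω hω
      simp only [workP, if_neg hw0] at hω
      simp only [Pi.add_apply, Pi.sub_apply, Pi.mul_apply, hω]
      ring

lemma hasCondExp_psiSWO_of_le [IsFiniteMeasure P] (hset : SetupB P J X Z S Y)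
    (hTI : TreatmentIgnorability P J X Z S Y) (hwJ : w ≤ J) {cw : ℝ} (hcw : 0 < cw)
    (hπm : Measurable (πt w)) (hπb : w ≠ 0 → ∀ x, πt w x ∈ Set.Icc cw (1 - cw))
    (hpm : Measurable (pt w)) (hpb : w ≠ 0 → ∀ x, pt w x ∈ Set.Icc cw (1 - cw))
    (hcorrect : (w ≠ 0 → (fun ω => πt w (X ω)) =ᵐ[P] piX P X Z w) ∨
      workP X pt w =ᵐ[P] pscore P X S J w) :
    HasCondExp (mX X) P (psiSWO P X Z S J pt πt w) (pscore P X S J w) := by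
  rcases Nat.eq_zero_or_pos w with rfl | hw
  · rw [psiSWO_zero, pscore_zero]
    exact hasCondExp_of_stronglyMeasurable (mX_le hset.hX) stronglyMeasurable_zero
      (integrable_zero _ _ _)
  · exact hasCondExp_psiSWO hset hTI (mem_Icc.mpr ⟨hw, hwJ⟩) hcw hπm (fun x => (hπb hw.ne' x).1)
      hpm (fun x => abs_le_one_of_mem_Icc hcw.le (hpb hw.ne' x)) (hcorrect.imp_left (· hw.ne'))

lemma hasCondExp_outcome_residual [IsFiniteMeasure P] (hset : SetupB P J X Z S Y)
    (hTI : TreatmentIgnorability P J X Z S Y) (hz : z ∈ Icc 1 J) {mz : Ω → ℝ}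
    (hmz : (fun ω => mz ω * piX P X Z z ω * pscore P X S J z ω)
      =ᵐ[P] P[fun ω => Yobs J Z Y ω * Sobs J Z S ω * indic Z z ω|mX X])
    {m : Ω → ℝ} (hm : StronglyMeasurable[mX X] m) {C : ℝ} (hmC : ∀ ω, |m ω| ≤ C) :
    HasCondExp (mX X) P (fun ω => indic Z z ω * Sobs J Z S ω * (Yobs J Z Y ω - m ω))
      (fun ω => (mz ω - m ω) * piX P X Z z ω * pscore P X S J z ω) :=
  ((hasCondExp_indic_mul_Sobs_mul_Yobs hset hmz).sub
    ((hasCondExp_indic_mul_Sobs hset hTI hz).mul_left (mX_le hset.hX) hm hmC)).congr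
    (.of_forall fun ω => by simp only [Pi.sub_apply, Pi.mul_apply]; ring)
    (.of_forall fun ω => by simp only [Pi.sub_apply, Pi.mul_apply]; ring)

/-- With a correct outcome model the first summand vanishes; with correct propensity and principal
scores it equals `(m - m') (p₁ - p₀)`. -/
lemma triple_robust_identity {m m' π π' p p' p₁ p₁' p₀ p₀' : ℝ} (hπ' : π' ≠ 0) (hp' : p' ≠ 0)
    (h : (π' = π ∧ p' = p ∧ p₁' = p₁ ∧ p₀' = p₀) ∨ m' = m) :
    (p₁' - p₀') * (p'⁻¹ * (π'⁻¹ * ((m - m') * π * p))) + m' * (p₁ - p₀) = m * (p₁ - p₀) := by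
  rcases h with ⟨rfl, rfl, rfl, rfl⟩ | rfl
  · field_simp
    ring
  · ring

lemma hasCondExp_xi [IsFiniteMeasure P] (hset : SetupB P J X Z S Y)
    (hTI : TreatmentIgnorability P J X Z S Y) (hmono : Monotonicity P J S) (hz : z ∈ Icc 1 J)
    {g : ℕ} (hg : g ∈ Icc 1 J) {mz : Ω → ℝ}
    (hmz : (fun ω => mz ω * piX P X Z z ω * pscore P X S J z ω)
      =ᵐ[P] P[fun ω => Yobs J Z Y ω * Sobs J Z S ω * indic Z z ω|mX X])
    {mt : 𝒳 → ℝ} {cw Cm : ℝ} (hcw : 0 < cw)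
    (hπm : Measurable (πt z)) (hπb : ∀ x, cw ≤ πt z x)
    (hptm : ∀ w ∈ ({J - g, J - g + 1, z} : Set ℕ), Measurable (pt w))
    (hptb : ∀ w ∈ ({J - g, J - g + 1, z} : Set ℕ), w ≠ 0 → ∀ x, pt w x ∈ Set.Icc cw (1 - cw))
    (hmtm : Measurable mt) (hmtb : ∀ x, |mt x| ≤ Cm)
    (hψ : HasCondExp (mX X) P
      (psiSWO P X Z S J pt πt (J - g + 1) - psiSWO P X Z S J pt πt (J - g))
      (pscore P X S J (J - g + 1) - pscore P X S J (J - g)))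
    (hcorrect : ((fun ω => πt z (X ω)) =ᵐ[P] piX P X Z z ∧
        ∀ w ∈ ({J - g, J - g + 1, z} : Set ℕ), workP X pt w =ᵐ[P] pscore P X S J w) ∨
      (fun ω => mt (X ω)) =ᵐ[P] mz) :
    HasCondExp (mX X) P
      (fun ω => (workP X pt (J - g + 1) ω - workP X pt (J - g) ω) / workP X pt z ω
          * (indic Z z ω * Sobs J Z S ω * (Yobs J Z Y ω - mt (X ω)) / πt z (X ω))
        + mt (X ω) * (psiSWO P X Z S J pt πt (J - g + 1) ω - psiSWO P X Z S J pt πt (J - g) ω))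
      (fun ω => mz ω * eg P X J S g ω) := by
  have hm := mX_le hset.hX
  have hz0 : z ≠ 0 := Nat.one_le_iff_ne_zero.mp (mem_Icc.mp hz).1
  have hpz : ∀ ω, cw ≤ workP X pt z ω := fun ω => by
    simpa [workP, hz0] using (hptb z (by simp) hz0 (X ω)).1
  have hΔ : ∀ ω, |workP X pt (J - g + 1) ω - workP X pt (J - g) ω| ≤ 2 := fun ω => by
    have h₁ := abs_workP_le_one (X := X) hcw.le (hptb (J - g + 1) (by simp)) ω
    have h₀ := abs_workP_le_one (X := X) hcw.le (hptb (J - g) (by simp)) ω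
    linarith [abs_sub (workP X pt (J - g + 1) ω) (workP X pt (J - g) ω)]
  have hmt := (measurable_mX_comp (X := X) hmtm).stronglyMeasurable
  have hres := hasCondExp_outcome_residual hset hTI hz hmz hmt fun ω => hmtb (X ω)
  have hweighted := ((hres.mul_left hm (f := fun ω => (πt z (X ω))⁻¹)
    (measurable_mX_comp hπm.inv).stronglyMeasurable
    fun ω => abs_inv_le_inv_of_le hcw (hπb (X ω))).mul_left hm
    (f := fun ω => (workP X pt z ω)⁻¹) (measurable_workP (hptm z (by simp))).inv.stronglyMeasurable
    fun ω => abs_inv_le_inv_of_le hcw (hpz ω)).mul_left hm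
    (f := workP X pt (J - g + 1) - workP X pt (J - g))
    ((measurable_workP (hptm _ (by simp))).sub
      (measurable_workP (hptm _ (by simp)))).stronglyMeasurable hΔ
  refine (hweighted.add (hψ.mul_left hm hmt fun ω => hmtb (X ω))).congr
    (.of_forall fun ω => by simp only [Pi.add_apply, Pi.sub_apply, Pi.mul_apply]; ring) ?_
  have hcorrect' : ∀ᵐ ω ∂P, (πt z (X ω) = piX P X Z z ω ∧
      workP X pt z ω = pscore P X S J z ω ∧
      workP X pt (J - g + 1) ω = pscore P X S J (J - g + 1) ω ∧
      workP X pt (J - g) ω = pscore P X S J (J - g) ω) ∨ mt (X ω) = mz ω := by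
    rcases hcorrect with ⟨hπc, hpc⟩ | hmc
    · filter_upwards [hπc, hpc z (by simp), hpc (J - g + 1) (by simp), hpc (J - g) (by simp)]
        with ω h₁ h₂ h₃ h₄ using .inl ⟨h₁, h₂, h₃, h₄⟩
    · filter_upwards [hmc] with ω h using .inr h
  filter_upwards [eg_ae_eq_pscore_sub hset hmono hg, hcorrect'] with ω heω hω
  simp only [Pi.add_apply, Pi.sub_apply, Pi.mul_apply, heω]
  exact triple_robust_identity (hcw.trans_le (hπb (X ω))).ne' (hcw.trans_le (hpz ω)).ne' hω

end Model

theorem statement13_general (P : Measure Ω) [IsProbabilityMeasure P] (J : ℕ)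
    (X : Ω → 𝒳) (Z : Ω → ℕ) (S Y : ℕ → Ω → ℝ)
    (hset : SetupB P J X Z S Y)
    (hTI : TreatmentIgnorability P J X Z S Y)
    (hmono : Monotonicity P J S)
    (hPI : PrincipalIgnorability P J X S Y)
    (hpos : Positivity P J X S)
    (z g : ℕ) (hz : z ∈ Finset.Icc 1 J) (hg : g ∈ Finset.Icc (J - z + 1) J)
    (mz : Ω → ℝ)
    (hmz : (fun ω => mz ω * piX P X Z z ω * pscore P X S J z ω)
      =ᵐ[P] P[fun ω => Yobs J Z Y ω * Sobs J Z S ω * indic Z z ω | mX X])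
    (cw : ℝ) (hcw : 0 < cw ∧ cw < 1 / 2)
    (πt pt : ℕ → 𝒳 → ℝ) (mt : 𝒳 → ℝ)
    (hπtm : ∀ w ∈ ({J - g, J - g + 1, z} : Set ℕ), Measurable (πt w))
    (hπtb : ∀ w ∈ ({J - g, J - g + 1, z} : Set ℕ), w ≠ 0 →
      ∀ x, πt w x ∈ Set.Icc cw (1 - cw))
    (hptm : ∀ w ∈ ({J - g, J - g + 1, z} : Set ℕ), Measurable (pt w))
    (hptb : ∀ w ∈ ({J - g, J - g + 1, z} : Set ℕ), w ≠ 0 →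
      ∀ x, pt w x ∈ Set.Icc cw (1 - cw))
    (hmtm : Measurable mt) (hmtb : ∃ C, ∀ x, |mt x| ≤ C)
    (htwo :
      ((∀ w ∈ ({J - g, J - g + 1, z} : Set ℕ), w ≠ 0 →
          (fun ω => πt w (X ω)) =ᵐ[P] piX P X Z w) ∧
        (∀ w ∈ ({J - g, J - g + 1, z} : Set ℕ), workP X pt w =ᵐ[P] pscore P X S J w)) ∨
      ((∀ w ∈ ({J - g, J - g + 1, z} : Set ℕ), w ≠ 0 →
          (fun ω => πt w (X ω)) =ᵐ[P] piX P X Z w) ∧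
        ((fun ω => mt (X ω)) =ᵐ[P] mz)) ∨
      ((∀ w ∈ ({J - g, J - g + 1, z} : Set ℕ), workP X pt w =ᵐ[P] pscore P X S J w) ∧
        ((fun ω => mt (X ω)) =ᵐ[P] mz))) :
    (∫ ω,
        ((workP X pt (J - g + 1) ω - workP X pt (J - g) ω) / workP X pt z ω
            * (indic Z z ω * Sobs J Z S ω * (Yobs J Z Y ω - mt (X ω)) / πt z (X ω))
          + mt (X ω)
            * (psiSWO P X Z S J pt πt (J - g + 1) ω
              - psiSWO P X Z S J pt πt (J - g) ω)) ∂P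
      = ∫ ω, Y z ω * indG J S g ω ∂P) ∧
    (∫ ω, (psiSWO P X Z S J pt πt (J - g + 1) ω - psiSWO P X Z S J pt πt (J - g) ω) ∂P
      = (P {ω | Gsum J S ω = (g : ℝ)}).toReal) := by
  obtain ⟨hz1, hzJ⟩ := mem_Icc.mp hz
  obtain ⟨hgz, hgJ⟩ := mem_Icc.mp hg
  have hg' : g ∈ Icc 1 J := mem_Icc.mpr ⟨by omega, hgJ⟩
  have hmX := mX_le hset.hX
  obtain ⟨Cm, hCm⟩ := hmtb
  have hψ : ∀ w ∈ ({J - g, J - g + 1, z} : Set ℕ), w ≤ J →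
      HasCondExp (mX X) P (psiSWO P X Z S J pt πt w) (pscore P X S J w) := by
    intro w hw hwJ
    refine hasCondExp_psiSWO_of_le hset hTI hwJ hcw.1 (hπtm w hw) (hπtb w hw) (hptm w hw)
      (hptb w hw) ?_
    rcases htwo with ⟨hπ, -⟩ | ⟨hπ, -⟩ | ⟨hp, -⟩
    exacts [.inl (hπ w hw), .inl (hπ w hw), .inr (hp w hw)]
  have hψdiff := (hψ (J - g + 1) (by simp) (by omega)).sub (hψ (J - g) (by simp) (by omega))
  refine ⟨?_, ?_⟩
  · have hξ := hasCondExp_xi hset hTI hmono hz hg' hmz hcw.1 (hπtm z (by simp))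
      (fun x => (hπtb z (by simp) (by omega) x).1) hptm hptb hmtm hCm hψdiff (by
        rcases htwo with ⟨hπ, hp⟩ | ⟨-, hm⟩ | ⟨-, hm⟩
        exacts [.inl ⟨hπ z (by simp) (by omega), hp⟩, .inr hm, .inr hm])
    rw [hξ.integral_eq hmX,
      (hasCondExp_Y_mul_indG hset hTI hmono hPI hpos hz hg hmz).integral_eq hmX]
  · refine (hψdiff.integral_eq hmX).trans ?_
    rw [integral_congr_ae (eg_ae_eq_pscore_sub hset hmono hg').symm, eg, integral_condExp hmX,
      hset.integral_indG]

/-- **population triple robustness.** If at least two of the three groups of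
working models (propensity scores, principal scores, outcome regression) are correct, then
`E[ξ̃] = E[Y_z·1(G=g)]` and `E[ψ̃_{S,J−g+1} − ψ̃_{S,J−g}] = P(G=g)`. -/
theorem statement13 (P : Measure Ω) [IsProbabilityMeasure P] (J : ℕ)
    (X : Ω → 𝒳) (Z : Ω → ℕ) (S Y : ℕ → Ω → ℝ)
    (hset : SetupB P J X Z S Y)
    (hTI : TreatmentIgnorability P J X Z S Y)
    (hmono : Monotonicity P J S)
    (hPI : PrincipalIgnorability P J X S Y)
    (hpos : Positivity P J X S)
    (z g : ℕ) (hz : z ∈ Finset.Icc 1 J) (hg : g ∈ Finset.Icc (J - z + 1) J)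
    (mz : Ω → ℝ) (hmzm : Measurable[mX X] mz)
    (hmz : (fun ω => mz ω * piX P X Z z ω * pscore P X S J z ω)
      =ᵐ[P] P[fun ω => Yobs J Z Y ω * Sobs J Z S ω * indic Z z ω | mX X])
    (cw : ℝ) (hcw : 0 < cw ∧ cw < 1 / 2)
    (πt pt : ℕ → 𝒳 → ℝ) (mt : 𝒳 → ℝ)
    (hπtm : ∀ w ∈ ({J - g, J - g + 1, z} : Set ℕ), Measurable (πt w))
    (hπtb : ∀ w ∈ ({J - g, J - g + 1, z} : Set ℕ), w ≠ 0 →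
      ∀ x, πt w x ∈ Set.Icc cw (1 - cw))
    (hptm : ∀ w ∈ ({J - g, J - g + 1, z} : Set ℕ), Measurable (pt w))
    (hptb : ∀ w ∈ ({J - g, J - g + 1, z} : Set ℕ), w ≠ 0 →
      ∀ x, pt w x ∈ Set.Icc cw (1 - cw))
    (hmtm : Measurable mt) (hmtb : ∃ C, ∀ x, |mt x| ≤ C)
    (htwo :
      ((∀ w ∈ ({J - g, J - g + 1, z} : Set ℕ), w ≠ 0 →
          (fun ω => πt w (X ω)) =ᵐ[P] piX P X Z w) ∧
        (∀ w ∈ ({J - g, J - g + 1, z} : Set ℕ), workP X pt w =ᵐ[P] pscore P X S J w)) ∨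
      ((∀ w ∈ ({J - g, J - g + 1, z} : Set ℕ), w ≠ 0 →
          (fun ω => πt w (X ω)) =ᵐ[P] piX P X Z w) ∧
        ((fun ω => mt (X ω)) =ᵐ[P] mz)) ∨
      ((∀ w ∈ ({J - g, J - g + 1, z} : Set ℕ), workP X pt w =ᵐ[P] pscore P X S J w) ∧
        ((fun ω => mt (X ω)) =ᵐ[P] mz))) :
    (∫ ω,
        ((workP X pt (J - g + 1) ω - workP X pt (J - g) ω) / workP X pt z ω
            * (indic Z z ω * Sobs J Z S ω * (Yobs J Z Y ω - mt (X ω)) / πt z (X ω))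
          + mt (X ω)
            * (psiSWO P X Z S J pt πt (J - g + 1) ω
              - psiSWO P X Z S J pt πt (J - g) ω)) ∂P
      = ∫ ω, Y z ω * indG J S g ω ∂P) ∧
    (∫ ω, (psiSWO P X Z S J pt πt (J - g + 1) ω - psiSWO P X Z S J pt πt (J - g) ω) ∂P
      = (P {ω | Gsum J S ω = (g : ℝ)}).toReal) :=
  statement13_general P J X Z S Y hset hTI hmono hPI hpos z g hz hg mz hmz cw hcw πt pt mt hπtm hπtb
    hptm hptb hmtm hmtb htwo

end TruncationByDeath
end
end
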